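/- Let π_1, π_2 be a regular system of parameters of R, let a_i, b_i ∈ ℤ and ξ_i ∈ R^× for i = 1,…,4, and set b := (π_1^{a_1} π_2^{b_1} ξ_1) ∧ (π_1^{a_2} π_2^{b_2} ξ_2) ∧ (π_1^{a_3} π_2^{b_3} ξ_3) ∧ (π_1^{a_4} π_2^{b_4} ξ_4) ∈ Λ^4 L^×. Then ∂_{ν̄_p}^{(3)}(∂_{ν_p}^{(4)}(b)) = 0 in Λ^2 k^× for all but finitely many height-one primes p of R with R/p regular, and the sum Σ_p ∂_{ν̄_p}^{(3)}(∂_{ν_p}^{(4)}(b)), taken over all height-one primes p of R with R/p regular, equals 0 in Λ^2 k^×. -/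

import Mathlib

open scoped TensorProduct
open ExteriorAlgebra

noncomputable section ChowPrelim

universe u

/-- The ℚ-vector space `F^× ⊗ ℚ` attached to a field `F`. -/
abbrev UnitsQ (F : Type u) [Field F] : Type u := ℚ ⊗[ℤ] (Additive Fˣ)

/-- The canonical map `F → F^× ⊗ ℚ`, sending a nonzero `x` to `x ⊗ 1` and `0` to `0`. -/
noncomputable def mkQ {F : Type u} [Field F] (x : F) : UnitsQ F :=
  letI := Classical.dec (x = 0)
  if h : x = 0 then 0 else (1 : ℚ) ⊗ₜ[ℤ] (Additive.ofMul (Units.mk0 x h))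

/-- The wedge `x₁ ∧ ⋯ ∧ xₙ ∈ Λ^n (F^× ⊗ ℚ)` of a family of elements of `F`. -/
noncomputable def wedgeF {F : Type u} [Field F] (n : ℕ) (x : Fin n → F) :
    ⋀[ℚ]^n (UnitsQ F) :=
  ⟨ExteriorAlgebra.ιMulti ℚ n (fun i => mkQ (x i)),
    ExteriorAlgebra.ιMulti_range ℚ n ⟨_, rfl⟩⟩

/-- Wedge of an abstract family of vectors. -/
noncomputable def wedgeV {M : Type u} [AddCommGroup M] [Module ℚ M] (n : ℕ) (v : Fin n → M) :
    ⋀[ℚ]^n M :=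
  ⟨ExteriorAlgebra.ιMulti ℚ n v, ExteriorAlgebra.ιMulti_range ℚ n ⟨_, rfl⟩⟩

/-- The product `a ∧ v₁ ∧ ⋯ ∧ v_q : Λ^r M` of an element `a ∈ Λ^p M` with `q` further vectors,
where `p + q = r`. -/
noncomputable def wedgeMulC {M : Type u} [AddCommGroup M] [Module ℚ M] (p q r : ℕ)
    (h : p + q = r) (a : ⋀[ℚ]^p M) (v : Fin q → M) : ⋀[ℚ]^r M :=
  ⟨a.1 * (ExteriorAlgebra.ιMulti ℚ q v : ExteriorAlgebra ℚ M), by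
    subst h
    have hmem : (ExteriorAlgebra.ιMulti ℚ q v : ExteriorAlgebra ℚ M) ∈
        (LinearMap.range (ι ℚ : M →ₗ[ℚ] ExteriorAlgebra ℚ M)) ^ q :=
      ExteriorAlgebra.ιMulti_range ℚ q ⟨_, rfl⟩
    have h2 := Submodule.mul_mem_mul a.2 hmem
    rw [← pow_add] at h2
    exact h2⟩

/-- The functorial map `Λ^n M → Λ^n N` induced by a linear map. -/
noncomputable def powMap {M N : Type u} [AddCommGroup M] [Module ℚ M]
    [AddCommGroup N] [Module ℚ N] (n : ℕ) (f : M →ₗ[ℚ] N) :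
    ⋀[ℚ]^n M →ₗ[ℚ] ⋀[ℚ]^n N :=
  (ExteriorAlgebra.map f).toLinearMap.restrict (p := ⋀[ℚ]^n M) (q := ⋀[ℚ]^n N)
    (by
      intro x hx
      have h : Submodule.map (ExteriorAlgebra.map f).toLinearMap (⋀[ℚ]^n M) ≤ ⋀[ℚ]^n N := by
        rw [← ExteriorAlgebra.ιMulti_span_fixedDegree, ← ExteriorAlgebra.ιMulti_span_fixedDegree,
          Submodule.map_span]
        refine Submodule.span_le.2 ?_
        rintro _ ⟨_, ⟨v, rfl⟩, rfl⟩
        exact Submodule.subset_span ⟨f ∘ v, (ExteriorAlgebra.map_apply_ιMulti f v).symm⟩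
      exact h ⟨x, hx, rfl⟩)

/-- The linear map `F^× ⊗ ℚ → K^× ⊗ ℚ` induced by a field embedding. -/
noncomputable def unitsQMap {F K : Type u} [Field F] [Field K] (j : F →+* K) :
    UnitsQ F →ₗ[ℚ] UnitsQ K :=
  LinearMap.baseChange ℚ
    ((MonoidHom.toAdditive (Units.map (j : F →* K))).toIntLinearMap)

section PreBloch

variable (F : Type u) [Field F]

/-- Auxiliary "difference" of two points of `P^1(F) = Option F` (`none` is `∞`),
used to define the cross-ratio. -/
def pdiff : Option F → Option F → F
  | some a, some b => a - b
  | _, _ => 1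

/-- The cross-ratio of four points of `P^1(F)`, as an element of `F`
(it lies in `F ∖ {0,1}` when the four points are distinct). -/
def crossRatio (x1 x2 x3 x4 : Option F) : F :=
  (pdiff F x1 x3 * pdiff F x2 x4) / (pdiff F x1 x4 * pdiff F x2 x3)

/-- The subspace of relations defining the pre-Bloch group: `{0}₂, {1}₂, {∞}₂` and the
five-term cross-ratio relations for five distinct points of `P^1(F)`. -/
def B2Rel : Submodule ℚ (Option F →₀ ℚ) :=
  Submodule.span ℚ
    ({Finsupp.single (some 0) 1, Finsupp.single (some 1) 1, Finsupp.single none 1} ∪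
      {r | ∃ x : Fin 5 → Option F, Function.Injective x ∧
        r = ∑ i : Fin 5, ((-1 : ℚ) ^ (i : ℕ)) •
          Finsupp.single (some (crossRatio F (x (i.succAbove 0)) (x (i.succAbove 1))
            (x (i.succAbove 2)) (x (i.succAbove 3)))) (1 : ℚ)})

/-- The pre-Bloch group `B₂(F)` (with ℚ-coefficients). -/
abbrev B2 : Type u := (Option F →₀ ℚ) ⧸ B2Rel F

/-- The generator `{x}₂` of the pre-Bloch group. -/
def B2.gen {F : Type u} [Field F] (x : F) : B2 F :=
  Submodule.Quotient.mk (Finsupp.single (some x) 1)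

end PreBloch

section Deltas

variable (F : Type u) [Field F]

/-- `d` is the differential `δ₂ : B₂(F) → Λ² F^×`, `{x}₂ ↦ x ∧ (1-x)`. -/
def IsDelta2 (d : B2 F →ₗ[ℚ] ⋀[ℚ]^2 (UnitsQ F)) : Prop :=
  ∀ x : F, x ≠ 0 → x ≠ 1 → d (B2.gen x) = wedgeF 2 ![x, 1 - x]

/-- `d` is the differential `δ₃ : B₂(F) ⊗ F^× → Λ³ F^×`, `{x}₂ ⊗ y ↦ x ∧ (1-x) ∧ y`. -/
def IsDelta3 (d : B2 F ⊗[ℚ] UnitsQ F →ₗ[ℚ] ⋀[ℚ]^3 (UnitsQ F)) : Prop :=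
  ∀ x y : F, x ≠ 0 → x ≠ 1 → y ≠ 0 →
    d (B2.gen x ⊗ₜ mkQ y) = wedgeF 3 ![x, 1 - x, y]

/-- `d` is the differential `δ₄ : B₂(F) ⊗ Λ² F^× → Λ⁴ F^×`,
`{x}₂ ⊗ (y ∧ z) ↦ x ∧ (1-x) ∧ y ∧ z`. -/
def IsDelta4 (d : B2 F ⊗[ℚ] (⋀[ℚ]^2 (UnitsQ F)) →ₗ[ℚ] ⋀[ℚ]^4 (UnitsQ F)) : Prop :=
  ∀ x y z : F, x ≠ 0 → x ≠ 1 → y ≠ 0 → z ≠ 0 →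
    d (B2.gen x ⊗ₜ wedgeF 2 ![y, z]) = wedgeF 4 ![x, 1 - x, y, z]

end Deltas

section Valuations

variable {F K : Type u} [Field F] [Field K]

/-- `ν` is (the additive form of) a discrete valuation on `F`:
a surjection onto `ℤ` defined on `F ∖ {0}`, multiplicative, and
satisfying the ultrametric inequality. -/
structure IsDVal (ν : F → ℤ) : Prop where
  map_mul : ∀ x y : F, x ≠ 0 → y ≠ 0 → ν (x * y) = ν x + ν y
  map_add : ∀ x y : F, x ≠ 0 → y ≠ 0 → x + y ≠ 0 → min (ν x) (ν y) ≤ ν (x + y)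
  surj : ∀ n : ℤ, ∃ x : F, x ≠ 0 ∧ ν x = n

/-- `res : F → K` realizes `K` as the residue field of the discrete valuation `ν`:
it is a surjective ring homomorphism on the valuation ring `O_ν` with kernel the
maximal ideal `m_ν` (and arbitrary elsewhere). -/
structure IsResidue (ν : F → ℤ) (res : F → K) : Prop where
  map_one : res 1 = 1
  map_add : ∀ x y : F, (x = 0 ∨ 0 ≤ ν x) → (y = 0 ∨ 0 ≤ ν y) →
    res (x + y) = res x + res y
  map_mul : ∀ x y : F, (x = 0 ∨ 0 ≤ ν x) → (y = 0 ∨ 0 ≤ ν y) →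
    res (x * y) = res x * res y
  zero_iff : ∀ x : F, (x = 0 ∨ 0 ≤ ν x) → (res x = 0 ↔ (x = 0 ∨ 0 < ν x))
  surj : ∀ z : K, ∃ x : F, (x = 0 ∨ 0 ≤ ν x) ∧ res x = z

/-- `D` is the tame symbol `∂_ν^{(n+1)} : Λ^{n+1} F^× → Λ^n K^×` attached to the discrete
valuation `ν` with residue field `K` (via `res`): it is characterized by
`∂(π ∧ u₂ ∧ ⋯ ∧ u_{n+1}) = ū₂ ∧ ⋯ ∧ ū_{n+1}` for a uniformizer `π` and units `uᵢ`. -/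
def IsTame (ν : F → ℤ) (res : F → K) (n : ℕ)
    (D : ⋀[ℚ]^(n + 1) (UnitsQ F) →ₗ[ℚ] ⋀[ℚ]^n (UnitsQ K)) : Prop :=
  ∀ (π : F) (u : Fin n → F), π ≠ 0 → ν π = 1 → (∀ i, u i ≠ 0 ∧ ν (u i) = 0) →
    D (wedgeF (n + 1) (Fin.cons π u)) = wedgeF n (fun i => res (u i))

/-- `D` is the tame symbol `∂_ν^{(2)} : Λ² F^× → K^×`, with target the residue field itself. -/
def IsTame2U (ν : F → ℤ) (res : F → K) (D : ⋀[ℚ]^2 (UnitsQ F) →ₗ[ℚ] UnitsQ K) : Prop :=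
  ∀ π u : F, π ≠ 0 → ν π = 1 → u ≠ 0 → ν u = 0 → D (wedgeF 2 ![π, u]) = mkQ (res u)

/-- `D` is the tame symbol `∂_ν : B₂(F) ⊗ F^× → B₂(K)`. -/
def IsTameB1 (ν : F → ℤ) (res : F → K)
    (D : B2 F ⊗[ℚ] UnitsQ F →ₗ[ℚ] B2 K) : Prop :=
  (∀ a b : F, a ≠ 0 → a ≠ 1 → ν a ≠ 0 → b ≠ 0 → D (B2.gen a ⊗ₜ mkQ b) = 0) ∧
  (∀ u b : F, u ≠ 0 → ν u = 0 → b ≠ 0 →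
    D (B2.gen u ⊗ₜ mkQ b) = -((ν b : ℚ) • B2.gen (res u)))

/-- `D` is the tame symbol `∂_ν : B₂(F) ⊗ Λ² F^× → B₂(K) ⊗ K^×`, where `D2` is the tame
symbol `∂_ν^{(2)}`. -/
def IsTameB2 (ν : F → ℤ) (res : F → K) (D2 : ⋀[ℚ]^2 (UnitsQ F) →ₗ[ℚ] UnitsQ K)
    (D : B2 F ⊗[ℚ] (⋀[ℚ]^2 (UnitsQ F)) →ₗ[ℚ] B2 K ⊗[ℚ] UnitsQ K) : Prop :=
  (∀ (a : F) (b : ⋀[ℚ]^2 (UnitsQ F)), a ≠ 0 → a ≠ 1 → ν a ≠ 0 → D (B2.gen a ⊗ₜ b) = 0) ∧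
  (∀ (u : F) (b : ⋀[ℚ]^2 (UnitsQ F)), u ≠ 0 → ν u = 0 →
    D (B2.gen u ⊗ₜ b) = -(B2.gen (res u) ⊗ₜ D2 b))

/-- `D` is the tame symbol `∂_ν : B₂(F) ⊗ Λ^{n+1} F^× → B₂(K) ⊗ Λ^n K^×`, where `Dn` is
the tame symbol `∂_ν^{(n+1)}`. -/
def IsTameBGen (ν : F → ℤ) (res : F → K) (n : ℕ)
    (Dn : ⋀[ℚ]^(n + 1) (UnitsQ F) →ₗ[ℚ] ⋀[ℚ]^n (UnitsQ K))
    (D : B2 F ⊗[ℚ] (⋀[ℚ]^(n + 1) (UnitsQ F)) →ₗ[ℚ] B2 K ⊗[ℚ] (⋀[ℚ]^n (UnitsQ K))) : Prop :=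
  (∀ (a : F) (b : ⋀[ℚ]^(n + 1) (UnitsQ F)), a ≠ 0 → a ≠ 1 → ν a ≠ 0 →
    D (B2.gen a ⊗ₜ b) = 0) ∧
  (∀ (u : F) (b : ⋀[ℚ]^(n + 1) (UnitsQ F)), u ≠ 0 → ν u = 0 →
    D (B2.gen u ⊗ₜ b) = -(B2.gen (res u) ⊗ₜ Dn b))

end Valuations

section Fields

variable (k F : Type u) [Field k] [Field F] [Algebra k F]

/-- `F` is a finitely generated extension of `k` of transcendence degree `1`. -/
def IsFields1 : Prop :=
  (∃ s : Finset F, IntermediateField.adjoin k (s : Set F) = ⊤) ∧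
  ∃ x : F, Transcendental k x ∧
    Algebra.IsAlgebraic (IntermediateField.adjoin k {x}) F

/-- `F` is a finitely generated extension of `k` of transcendence degree `2`. -/
def IsFields2 : Prop :=
  (∃ s : Finset F, IntermediateField.adjoin k (s : Set F) = ⊤) ∧
  ∃ x y : F, AlgebraicIndependent k ![x, y] ∧
    Algebra.IsAlgebraic (IntermediateField.adjoin k {x, y}) F

/-- `res : F → k` is the canonical residue map of `ν` onto `k`
(restricting to the identity on `k`). -/
def GoodResK (ν : F → ℤ) (res : F → k) : Prop :=
  IsResidue ν res ∧ ∀ c : k, res (algebraMap k F c) = c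

/-- The set `val(F)` of discrete valuations of `F` trivial on `k` with residue field `k`. -/
def ValInd : Type u :=
  {ν : F → ℤ // IsDVal ν ∧ (∀ c : k, c ≠ 0 → ν (algebraMap k F c) = 0) ∧
    ∃ res : F → k, GoodResK k F ν res}

/-- `h : Λ³ F^× → B₂(k)` is a lifted reciprocity map on `F ∈ Fields₁`:
(1) `-δ₂(h a) = Σ_{ν ∈ val(F)} ∂_ν^{(3)} a`;
(2) `h (δ₃ c) = Σ_{ν ∈ val(F)} ∂_ν c`;
(3) `h` vanishes on the image of `Λ² F^× ⊗ k^× → Λ³ F^×`. -/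
def IsLiftedRec (h : ⋀[ℚ]^3 (UnitsQ F) →ₗ[ℚ] B2 k) : Prop :=
  (∀ d2 : B2 k →ₗ[ℚ] ⋀[ℚ]^2 (UnitsQ k), IsDelta2 k d2 →
    ∀ res : ∀ _ : ValInd k F, F → k, (∀ v : ValInd k F, GoodResK k F v.1 (res v)) →
    ∀ D : ∀ _ : ValInd k F, ⋀[ℚ]^3 (UnitsQ F) →ₗ[ℚ] ⋀[ℚ]^2 (UnitsQ k),
      (∀ v : ValInd k F, IsTame v.1 (res v) 2 (D v)) →
    ∀ a : ⋀[ℚ]^3 (UnitsQ F), -(d2 (h a)) = ∑ᶠ v : ValInd k F, D v a) ∧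
  (∀ d3 : B2 F ⊗[ℚ] UnitsQ F →ₗ[ℚ] ⋀[ℚ]^3 (UnitsQ F), IsDelta3 F d3 →
    ∀ res : ∀ _ : ValInd k F, F → k, (∀ v : ValInd k F, GoodResK k F v.1 (res v)) →
    ∀ DB : ∀ _ : ValInd k F, B2 F ⊗[ℚ] UnitsQ F →ₗ[ℚ] B2 k,
      (∀ v : ValInd k F, IsTameB1 v.1 (res v) (DB v)) →
    ∀ c : B2 F ⊗[ℚ] UnitsQ F, h (d3 c) = ∑ᶠ v : ValInd k F, DB v c) ∧
  (∀ (y z : F) (c : k), y ≠ 0 → z ≠ 0 → c ≠ 0 →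
    h (wedgeF 3 ![y, z, algebraMap k F c]) = 0)

end Fields

/-- The degree `[K : j(F)]` of a field embedding. -/
noncomputable def fieldDeg {F K : Type u} [Field F] [Field K] (j : F →+* K) : ℕ :=
  letI : Algebra F K := j.toAlgebra
  Module.finrank F K

/-- The pullback `j^* h = (1/[F₂ : j(F₁)]) · h ∘ j_*` of a lifted reciprocity map. -/
noncomputable def pullRec (k F₁ F₂ : Type u) [Field k] [Field F₁] [Field F₂]
    (j : F₁ →+* F₂) (h : ⋀[ℚ]^3 (UnitsQ F₂) →ₗ[ℚ] B2 k) :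
    ⋀[ℚ]^3 (UnitsQ F₁) →ₗ[ℚ] B2 k :=
  ((fieldDeg j : ℚ))⁻¹ • (h ∘ₗ powMap 3 (unitsQMap j))

end ChowPrelim

noncomputable section ChowPrelim2

universe u

open scoped TensorProduct

/-- The monic irreducible polynomials over `F`, indexing the closed points of `𝔸¹_F`,
i.e. the general discrete valuations of `F(t)`. -/
def MonicIrr (F : Type u) [Field F] : Type u :=
  {p : Polynomial F // p.Monic ∧ Irreducible p}

/-- The residue field `F(p) = F[t]/(p)` of the valuation attached to a monic irreducible
polynomial `p`. -/
def ResField {F : Type u} [Field F] (p : MonicIrr F) : Type u := AdjoinRoot p.1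

noncomputable instance ResField.instField {F : Type u} [Field F] (p : MonicIrr F) :
    Field (ResField p) :=
  letI : Fact (Irreducible p.1) := ⟨p.2.2⟩
  inferInstanceAs (Field (AdjoinRoot p.1))

/-- `ν` is the discrete valuation of `F(t)` attached to the monic irreducible polynomial `p`. -/
def IsNuP {F : Type u} [Field F] (p : MonicIrr F) (ν : RatFunc F → ℤ) : Prop :=
  IsDVal ν ∧ ν (algebraMap (Polynomial F) (RatFunc F) p.1) = 1 ∧
    ∀ g : Polynomial F, g ≠ 0 → ¬(p.1 ∣ g) →
      ν (algebraMap (Polynomial F) (RatFunc F) g) = 0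

/-- `res` is the canonical residue map `F(t) → F(p)` of the valuation attached to `p`. -/
def IsResP {F : Type u} [Field F] (p : MonicIrr F) (ν : RatFunc F → ℤ)
    (res : RatFunc F → ResField p) : Prop :=
  IsResidue ν res ∧ ∀ g : Polynomial F,
    res (algebraMap (Polynomial F) (RatFunc F) g) =
      (AdjoinRoot.mk p.1 g : AdjoinRoot p.1)

/-- Bundled realization of the residue field of a discrete valuation `ν` on `L`
(trivial on `k`): a field `R` with a `k`-algebra structure together with the residue map. -/
structure ResData (k L : Type u) [Field k] [Field L] [Algebra k L] (ν : L → ℤ) :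
    Type (u + 1) where
  R : Type u
  [fieldR : Field R]
  [algR : Algebra k R]
  res : L → R
  isRes : IsResidue ν res
  compat : ∀ c : k, res (algebraMap k L c) = algebraMap k R c

attribute [instance] ResData.fieldR ResData.algR

/-- The set `dval(L)` of divisorial valuations of `L ∈ Fields₂`: discrete valuations trivial
on `k` whose residue field is a finitely generated extension of `k` of transcendence
degree `1`. -/
def DValInd (k L : Type u) [Field k] [Field L] [Algebra k L] : Type u :=
  {ν : L → ℤ // IsDVal ν ∧ (∀ c : k, c ≠ 0 → ν (algebraMap k L c) = 0) ∧
    ∃ rd : ResData k L ν, IsFields1 k rd.R}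

/-- A height-one prime ideal (in a domain). -/
def IsHeightOne {R : Type u} [CommRing R] (p : Ideal R) : Prop :=
  p.IsPrime ∧ p ≠ ⊥ ∧ ∀ q : Ideal R, q.IsPrime → q < p → q = ⊥

/-- `R/p` is regular, i.e. (for a one-dimensional local ring) the maximal ideal of `R/p`
is principal. -/
def QuotRegular {R : Type u} [CommRing R] [IsLocalRing R] (p : Ideal R) : Prop :=
  ∃ t : R, Ideal.map (Ideal.Quotient.mk p) (IsLocalRing.maximalIdeal R) =
    Ideal.span {Ideal.Quotient.mk p t}

/-- The height-one primes `p` of `R` with `R/p` regular. -/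
def RegPrimes (R : Type u) [CommRing R] [IsLocalRing R] : Type u :=
  {p : Ideal R // IsHeightOne p ∧ QuotRegular p}

instance RegPrimes.isPrime {R : Type u} [CommRing R] [IsLocalRing R] (p : RegPrimes R) :
    p.1.IsPrime := p.2.1.1

/-- The residue field `κ(p) = Frac(R/p)` of a prime `p`. -/
def ResFieldP {R : Type u} [CommRing R] [IsLocalRing R] [IsDomain R] (p : RegPrimes R) :
    Type u := FractionRing (R ⧸ p.1)

noncomputable instance ResFieldP.instField {R : Type u} [CommRing R] [IsLocalRing R]
    [IsDomain R] (p : RegPrimes R) : Field (ResFieldP p) :=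
  inferInstanceAs (Field (FractionRing (R ⧸ p.1)))

/-- `ν` is the discrete valuation `ν_p` of `L = Frac R` attached to a height-one prime `p`:
it is nonnegative on `R` and positive exactly on `p`. -/
def IsNuPrime {R L : Type u} [CommRing R] [Field L] [Algebra R L] (p : Ideal R)
    (ν : L → ℤ) : Prop :=
  IsDVal ν ∧ (∀ x : R, x ≠ 0 → 0 ≤ ν (algebraMap R L x)) ∧
    ∀ x : R, x ≠ 0 → (x ∈ p ↔ 0 < ν (algebraMap R L x))

/-- `res` is the canonical residue map `L → κ(p)` of the valuation `ν_p`. -/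
def IsResPrime {R L : Type u} [CommRing R] [IsLocalRing R] [IsDomain R] [Field L]
    [Algebra R L] (p : RegPrimes R) (ν : L → ℤ) (res : L → ResFieldP p) : Prop :=
  IsResidue ν res ∧ ∀ x : R,
    res (algebraMap R L x) =
      algebraMap (R ⧸ p.1) (FractionRing (R ⧸ p.1)) (Ideal.Quotient.mk p.1 x)

/-- `ν̄` is the discrete valuation of `κ(p)` attached to the discrete valuation ring `R/p`:
nonnegative on `R/p` and positive exactly on the image of the maximal ideal of `R`. -/
def IsNuBar {R : Type u} [CommRing R] [IsLocalRing R] [IsDomain R] (p : RegPrimes R)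
    (ν : ResFieldP p → ℤ) : Prop :=
  IsDVal ν ∧
  (∀ x : R ⧸ p.1, x ≠ 0 →
    0 ≤ ν (algebraMap (R ⧸ p.1) (FractionRing (R ⧸ p.1)) x)) ∧
  ∀ x : R, Ideal.Quotient.mk p.1 x ≠ 0 →
    (x ∈ IsLocalRing.maximalIdeal R ↔
      0 < ν (algebraMap (R ⧸ p.1) (FractionRing (R ⧸ p.1)) (Ideal.Quotient.mk p.1 x)))

/-- `res` is the canonical residue map `κ(p) → k` of the valuation `ν̄_p`
(restricting to the identity on `k`). -/
def IsResBar {k R : Type u} [Field k] [CommRing R] [IsLocalRing R] [IsDomain R]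
    [Algebra k R] (p : RegPrimes R) (ν : ResFieldP p → ℤ) (res : ResFieldP p → k) : Prop :=
  IsResidue ν res ∧ ∀ c : k,
    res (algebraMap (R ⧸ p.1) (FractionRing (R ⧸ p.1))
      (Ideal.Quotient.mk p.1 (algebraMap k R c))) = c

/-- The Steinberg relations subspace of `Λ^n F^×` (with ℚ-coefficients). -/
def MilnorRel (F : Type u) [Field F] : (n : ℕ) → Submodule ℚ (⋀[ℚ]^n (UnitsQ F))
  | 0 => ⊥
  | 1 => ⊥
  | (m + 2) => Submodule.span ℚ
      {x | ∃ (a : F) (v : Fin m → F), a ≠ 0 ∧ a ≠ 1 ∧ (∀ i, v i ≠ 0) ∧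
        x = wedgeF (m + 2) (Fin.cons a (Fin.cons (1 - a) v))}

/-- The rational Milnor K-group `K_n^M(F) ⊗ ℚ`: the quotient of `Λ^n F^×` by the
Steinberg relations. -/
def MilnorQ (F : Type u) [Field F] (n : ℕ) : Type u :=
  (⋀[ℚ]^n (UnitsQ F)) ⧸ MilnorRel F n

noncomputable instance MilnorQ.instAddCommGroup (F : Type u) [Field F] (n : ℕ) :
    AddCommGroup (MilnorQ F n) :=
  inferInstanceAs (AddCommGroup ((⋀[ℚ]^n (UnitsQ F)) ⧸ MilnorRel F n))

noncomputable instance MilnorQ.instModule (F : Type u) [Field F] (n : ℕ) :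
    Module ℚ (MilnorQ F n) :=
  inferInstanceAs (Module ℚ ((⋀[ℚ]^n (UnitsQ F)) ⧸ MilnorRel F n))

/-- The class of an element of `Λ^n F^×` in `K_n^M(F) ⊗ ℚ`. -/
def MilnorQ.mk {F : Type u} [Field F] {n : ℕ} (x : ⋀[ℚ]^n (UnitsQ F)) : MilnorQ F n :=
  Submodule.Quotient.mk x

end ChowPrelim2

open scoped TensorProduct

universe u

/-!
Write `b = ⋀ᵢ π₁^{aᵢ} π₂^{bᵢ} ξᵢ`. Since `dim R = 2`, Krull's principal ideal theorem shows that
no power of `π₂` lies in `(π₁)`; hence `(π₁)` and `(π₂)` are height-one primes with regular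
quotients, and they are the only height-one primes containing `π₁` or `π₂`. At every other prime
all factors of `b` are units, so `∂b = 0` there.

Expanding `mkQ (π^a u) = a • mkQ π + mkQ u` multilinearly gives the usual formula
`∂(⋀ₖ π^{aₖ} uₖ) = Σₖ (-1)^k aₖ ⋀_{m ≠ k} ūₘ`. Applied twice, the double residue of `b` at `(π₁)`
is `Σ_{i,j} (-1)^{i+j} a_i b_{i'} c_s ∧ c_t`, where `i' = i.succAbove j`, `s < t` are the two
remaining positions and `c_s ∈ k` is the residue of `ξ_s`; at `(π₂)` the roles of `a` and `b` are
exchanged. The involution `(i, j) ↦ (i.succAbove j, j.predAbove i)` matches the two sums term by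
term with opposite signs.
-/

section UnitsQ

variable {F : Type u} [Field F]

theorem mkQ_of_ne_zero {x : F} (hx : x ≠ 0) :
    mkQ x = (1 : ℚ) ⊗ₜ[ℤ] Additive.ofMul (Units.mk0 x hx) := by
  simp [mkQ, hx]

theorem mkQ_mul {x y : F} (hx : x ≠ 0) (hy : y ≠ 0) : mkQ (x * y) = mkQ x + mkQ y := by
  rw [mkQ_of_ne_zero (mul_ne_zero hx hy), mkQ_of_ne_zero hx, mkQ_of_ne_zero hy,
    Units.mk0_mul, ofMul_mul, TensorProduct.tmul_add]

theorem mkQ_zpow {x : F} (hx : x ≠ 0) (n : ℤ) : mkQ (x ^ n) = (n : ℚ) • mkQ x := by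
  rw [mkQ_of_ne_zero (zpow_ne_zero n hx), mkQ_of_ne_zero hx, Int.cast_smul_eq_zsmul,
    ← TensorProduct.tmul_smul, ← ofMul_zpow]
  congr
  ext
  simp

theorem wedgeF_eq_ιMulti (n : ℕ) (x : Fin n → F) :
    wedgeF n x = exteriorPower.ιMulti ℚ n (fun i => mkQ (x i)) := rfl

theorem wedgeF_cons {n : ℕ} (x : F) (v : Fin n → F) :
    wedgeF (n + 1) (Fin.cons x v) =
      exteriorPower.ιMulti ℚ (n + 1) (Fin.cons (mkQ x) fun i => mkQ (v i)) := by
  rw [wedgeF_eq_ιMulti]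
  congr 1
  ext i
  cases i using Fin.cases <;> rfl

end UnitsQ

namespace AlternatingMap

variable {R M N ι : Type*} [CommRing R] [AddCommGroup M] [Module R M] [AddCommGroup N]
  [Module R N]

theorem map_smul_add [Fintype ι] [DecidableEq ι] (f : M [⋀^ι]→ₗ[R] N) (a : ι → R) (p : M)
    (u : ι → M) :
    f (fun i => a i • p + u i) = f u + ∑ i, a i • f (Function.update u i p) := by
  set g : Finset ι → N := fun s => (∏ i ∈ s, a i) • f (s.piecewise (fun _ => p) u)
  have hexpand : f (fun i => a i • p + u i) = ∑ s, g s := by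
    refine (f.toMultilinearMap.map_add_univ (fun i => a i • p) u).trans
      (Finset.sum_congr rfl fun s _ => ?_)
    have hs : s.piecewise (fun i => a i • p) u = s.piecewise
        (fun i => a i • s.piecewise (fun _ => p) u i) (s.piecewise (fun _ => p) u) := by
      ext i
      by_cases hi : i ∈ s <;> simp [hi]
    rw [hs]
    exact f.toMultilinearMap.map_piecewise_smul _ _ _
  -- a summand with two entries equal to `p` vanishes
  have hsmall : ∑ s, g s =
      ∑ s ∈ insert ∅ (Finset.univ.map ⟨({·}), Finset.singleton_injective⟩), g s := by
    refine (Finset.sum_subset (Finset.subset_univ _) fun s _ hs => ?_).symm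
    obtain ⟨i, hi, j, hj, hij⟩ : s.Nontrivial := by
      rw [← Finset.one_lt_card_iff_nontrivial, ← not_le, Nat.le_one_iff_eq_zero_or_eq_one,
        Finset.card_eq_zero, Finset.card_eq_one]
      rintro (rfl | ⟨i, rfl⟩) <;> simp at hs
    have hpp : s.piecewise (fun _ => p) u i = s.piecewise (fun _ => p) u j := by
      rw [Finset.piecewise_eq_of_mem _ _ _ hi, Finset.piecewise_eq_of_mem _ _ _ hj]
    simp only [g, f.map_eq_zero_of_eq _ hpp hij, smul_zero]
  rw [hexpand, hsmall, Finset.sum_insert (by simp), Finset.sum_map]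
  simp [g, Finset.piecewise_singleton]

end AlternatingMap

namespace Fin

theorem sum_sum_succAbove_antisymm {n : ℕ} {V : Type*} [AddCommGroup V] [Module ℚ V]
    (x y : Fin (n + 2) → ℚ) (w : (Fin n → Fin (n + 2)) → V) :
    ∑ i : Fin (n + 2), ∑ j : Fin (n + 1),
        ((-1) ^ (i : ℕ) * x i * ((-1) ^ (j : ℕ) * y (i.succAbove j))) •
          w (i.succAbove ∘ j.succAbove) =
      -∑ i : Fin (n + 2), ∑ j : Fin (n + 1),
        ((-1) ^ (i : ℕ) * y i * ((-1) ^ (j : ℕ) * x (i.succAbove j))) •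
          w (i.succAbove ∘ j.succAbove) := by
  let swap : Function.Involutive fun p : Fin (n + 2) × Fin (n + 1) =>
      (p.1.succAbove p.2, p.2.predAbove p.1) := fun p =>
    Prod.ext (succAbove_succAbove_predAbove p.1 p.2) (predAbove_predAbove_succAbove p.1 p.2)
  simp only [← Finset.sum_neg_distrib, ← Fintype.sum_prod_type']
  refine Fintype.sum_equiv swap.toPerm _ _ fun p => ?_
  have hw : (p.1.succAbove p.2).succAbove ∘ (p.2.predAbove p.1).succAbove =
      p.1.succAbove ∘ p.2.succAbove :=
    funext (succAbove_succAbove_succAbove_predAbove p.1 p.2)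
  simp only [Function.Involutive.coe_toPerm, succAbove_succAbove_predAbove, hw, ← neg_smul]
  congr 1
  have hsign : (-1 : ℚ) ^ _ = _ := neg_one_pow_succAbove_add_predAbove p.1 p.2
  rw [pow_add, pow_add] at hsign
  linear_combination (x p.1 * y (p.1.succAbove p.2)) * hsign

end Fin

section Valuations

variable {F K : Type u} [Field F] [Field K] {ν : F → ℤ} {res : F → K}

theorem IsDVal.map_one (hν : IsDVal ν) : ν 1 = 0 := by
  simpa using hν.map_mul 1 1 one_ne_zero one_ne_zero

theorem IsDVal.map_zpow (hν : IsDVal ν) {x : F} (hx : x ≠ 0) (n : ℤ) : ν (x ^ n) = n * ν x := by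
  induction n using Int.induction_on with
  | zero => simpa using hν.map_one
  | succ m ih => rw [zpow_add_one₀ hx, hν.map_mul _ _ (zpow_ne_zero _ hx) hx, ih]; ring
  | pred m ih =>
    have h := hν.map_mul _ _ (zpow_ne_zero (-(m : ℤ) - 1) hx) hx
    rw [← zpow_add_one₀ hx, sub_add_cancel, ih] at h
    linarith

theorem IsDVal.map_zpow_mul_zpow_mul (hν : IsDVal ν) {x y z : F} (hx : x ≠ 0) (hy : y ≠ 0)
    (hz : z ≠ 0) (a b : ℤ) : ν (x ^ a * y ^ b * z) = a * ν x + b * ν y + ν z := by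
  rw [hν.map_mul _ _ (mul_ne_zero (zpow_ne_zero a hx) (zpow_ne_zero b hy)) hz,
    hν.map_mul _ _ (zpow_ne_zero a hx) (zpow_ne_zero b hy), hν.map_zpow hx, hν.map_zpow hy]

theorem IsResidue.ne_zero (hres : IsResidue ν res) {x : F} (hx : x ≠ 0) (hνx : ν x = 0) :
    res x ≠ 0 := by
  rw [Ne, hres.zero_iff x (Or.inr hνx.ge)]
  simp [hx, hνx]

theorem IsResidue.map_zpow (hν : IsDVal ν) (hres : IsResidue ν res) {x : F} (hx : x ≠ 0)
    (hνx : ν x = 0) (n : ℤ) : res (x ^ n) = res x ^ n := by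
  have hunit : ∀ m : ℤ, 0 ≤ ν (x ^ m) := fun m => by rw [hν.map_zpow hx, hνx, mul_zero]
  induction n using Int.induction_on with
  | zero => simpa using hres.map_one
  | succ m ih =>
    rw [zpow_add_one₀ hx, hres.map_mul _ _ (Or.inr (hunit m)) (Or.inr hνx.ge), ih,
      zpow_add_one₀ (hres.ne_zero hx hνx)]
  | pred m ih =>
    have h := hres.map_mul _ _ (Or.inr (hunit (-(m : ℤ) - 1))) (Or.inr hνx.ge)
    rw [← zpow_add_one₀ hx, sub_add_cancel, ih] at h
    rw [zpow_sub_one₀ (hres.ne_zero hx hνx), h, mul_inv_cancel_right₀ (hres.ne_zero hx hνx)]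

end Valuations

section Tame

variable {F K : Type u} [Field F] [Field K] {ν : F → ℤ} {res : F → K} {n : ℕ}
  {D : ⋀[ℚ]^(n + 1) (UnitsQ F) →ₗ[ℚ] ⋀[ℚ]^n (UnitsQ K)}

theorem IsTame.apply_wedgeF_eq_zero_of_val_eq_zero (hν : IsDVal ν) (hD : IsTame ν res n D)
    (u : Fin (n + 1) → F) (hu : ∀ i, u i ≠ 0 ∧ ν (u i) = 0) : D (wedgeF (n + 1) u) = 0 := by
  obtain ⟨t, ht0, ht⟩ := hν.surj 1
  have htu : ν (t * u 0) = 1 := by rw [hν.map_mul _ _ ht0 (hu 0).1, (hu 0).2, ht, add_zero]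
  -- both `t u₀` and `t` are uniformizers, and `t u₀ ∧ rest = t ∧ rest + u₀ ∧ rest`
  have hsplit : wedgeF (n + 1) (Fin.cons (t * u 0) (Fin.tail u)) =
      wedgeF (n + 1) (Fin.cons t (Fin.tail u)) + wedgeF (n + 1) u := by
    conv_rhs => rw [← Fin.cons_self_tail u]
    rw [wedgeF_cons, wedgeF_cons, wedgeF_cons, mkQ_mul ht0 (hu 0).1]
    exact (exteriorPower.ιMulti ℚ (n + 1)).toMultilinearMap.cons_add _ _ _
  have h := congrArg D hsplit
  rwa [map_add, hD _ (Fin.tail u) (mul_ne_zero ht0 (hu 0).1) htu (fun i => hu i.succ),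
    hD _ (Fin.tail u) ht0 ht (fun i => hu i.succ), left_eq_add] at h

theorem IsTame.apply_wedgeF_zpow_mul (hν : IsDVal ν) (hD : IsTame ν res n D) {π : F}
    (hπ0 : π ≠ 0) (hπ : ν π = 1) (a : Fin (n + 1) → ℤ) (u : Fin (n + 1) → F)
    (hu : ∀ i, u i ≠ 0 ∧ ν (u i) = 0) :
    D (wedgeF (n + 1) (fun k => π ^ a k * u k)) =
      ∑ k : Fin (n + 1), ((-1) ^ (k : ℕ) * a k : ℚ) •
        wedgeF n (fun m => res (u (k.succAbove m))) := by
  have hfamily : (fun k => mkQ (π ^ a k * u k)) = fun k => (a k : ℚ) • mkQ π + mkQ (u k) := by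
    ext k
    rw [mkQ_mul (zpow_ne_zero _ hπ0) (hu k).1, mkQ_zpow hπ0]
  rw [wedgeF_eq_ιMulti, hfamily, AlternatingMap.map_smul_add, map_add, map_sum,
    ← wedgeF_eq_ιMulti, hD.apply_wedgeF_eq_zero_of_val_eq_zero hν u hu, zero_add]
  refine Finset.sum_congr rfl fun k _ => ?_
  have hcons : Matrix.vecCons (mkQ π) (k.removeNth fun i => mkQ (u i)) =
      fun i => mkQ ((Fin.cons π (k.removeNth u) : Fin (n + 1) → F) i) := by
    ext i
    cases i using Fin.cases <;> rfl
  rw [← Fin.insertNth_removeNth, AlternatingMap.map_insertNth, hcons, ← wedgeF_eq_ιMulti,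
    map_smul, map_zsmul, hD π (k.removeNth u) hπ0 hπ (fun i => hu _), ← Int.cast_smul_eq_zsmul ℚ,
    smul_smul, mul_comm]
  push_cast
  rfl

end Tame

theorem IsTame.comp_apply_wedgeF_zpow_mul_zpow_mul {F K k₀ : Type u} [Field F] [Field K]
    [Field k₀] {ν : F → ℤ} {res : F → K} {ν' : K → ℤ} {res' : K → k₀} {n : ℕ}
    {D : ⋀[ℚ]^(n + 2) (UnitsQ F) →ₗ[ℚ] ⋀[ℚ]^(n + 1) (UnitsQ K)}
    {D' : ⋀[ℚ]^(n + 1) (UnitsQ K) →ₗ[ℚ] ⋀[ℚ]^n (UnitsQ k₀)}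
    (hν : IsDVal ν) (hres : IsResidue ν res) (hν' : IsDVal ν')
    (hD : IsTame ν res (n + 1) D) (hD' : IsTame ν' res' n D')
    {π t : F} (hπ0 : π ≠ 0) (hπ : ν π = 1) (ht0 : t ≠ 0) (ht : ν t = 0) (ht' : ν' (res t) = 1)
    (ξ : Fin (n + 2) → F) (hξ : ∀ i, ξ i ≠ 0 ∧ ν (ξ i) = 0 ∧ ν' (res (ξ i)) = 0)
    (a b : Fin (n + 2) → ℤ) :
    D' (D (wedgeF (n + 2) fun k => π ^ a k * (t ^ b k * ξ k))) =
      ∑ i : Fin (n + 2), ∑ j : Fin (n + 1),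
        ((-1) ^ (i : ℕ) * a i * ((-1) ^ (j : ℕ) * b (i.succAbove j)) : ℚ) •
          wedgeF n fun m => res' (res (ξ (i.succAbove (j.succAbove m)))) := by
  have hunit : ∀ i, t ^ b i * ξ i ≠ 0 ∧ ν (t ^ b i * ξ i) = 0 := fun i =>
    ⟨mul_ne_zero (zpow_ne_zero _ ht0) (hξ i).1, by
      rw [hν.map_mul _ _ (zpow_ne_zero _ ht0) (hξ i).1, hν.map_zpow ht0, ht, (hξ i).2.1]; simp⟩
  have hres_unit : ∀ i, res (t ^ b i * ξ i) = res t ^ b i * res (ξ i) := fun i => by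
    rw [hres.map_mul _ _ (Or.inr (by rw [hν.map_zpow ht0, ht, mul_zero]))
      (Or.inr (hξ i).2.1.ge), hres.map_zpow hν ht0 ht]
  rw [hD.apply_wedgeF_zpow_mul hν hπ0 hπ a _ hunit, map_sum]
  refine Finset.sum_congr rfl fun i _ => ?_
  simp only [map_smul, hres_unit]
  rw [hD'.apply_wedgeF_zpow_mul hν' (hres.ne_zero ht0 ht) ht' _ _
    fun j => ⟨hres.ne_zero (hξ _).1 (hξ _).2.1, (hξ _).2.2⟩, Finset.smul_sum]
  simp only [smul_smul]

section LocalRing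

open IsLocalRing

variable {A : Type*} [CommRing A] [IsLocalRing A] [IsNoetherianRing A]

theorem exists_eq_pow_mul_not_dvd {t x : A} (ht : t ∈ maximalIdeal A) (hx : x ≠ 0) :
    ∃ (e : ℕ) (u : A), x = t ^ e * u ∧ ¬t ∣ u := by
  have hfin : FiniteMultiplicity t x := by
    by_contra h
    rw [FiniteMultiplicity.not_iff_forall] at h
    have hKrull := Ideal.iInf_pow_eq_bot_of_isLocalRing (Ideal.span {t})
      (by rwa [Ne, Ideal.span_singleton_eq_top, ← mem_nonunits_iff, ← mem_maximalIdeal])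
    refine hx ((Submodule.mem_bot A).mp (hKrull ▸ Submodule.mem_iInf _ |>.mpr fun i => ?_))
    rw [Ideal.span_singleton_pow, Ideal.mem_span_singleton]
    exact h i
  obtain ⟨u, hu, hndvd⟩ := hfin.exists_eq_pow_mul_and_not_dvd
  exact ⟨_, u, hu, hndvd⟩

theorem isDomain_of_maximalIdeal_eq_span_singleton {t : A}
    (hm : maximalIdeal A = Ideal.span {t}) (ht : ∀ n : ℕ, t ^ n ≠ 0) : IsDomain A := by
  have hfactor : ∀ x : A, x ≠ 0 → ∃ (e : ℕ) (w : Aˣ), x = t ^ e * w := by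
    intro x hx
    obtain ⟨e, u, rfl, hu⟩ := exists_eq_pow_mul_not_dvd (hm ▸ Ideal.mem_span_singleton_self t) hx
    have hunit : IsUnit u := by
      by_contra h
      exact hu (Ideal.mem_span_singleton.mp (hm ▸ (mem_maximalIdeal u).mpr h))
    exact ⟨e, hunit.unit, rfl⟩
  have : NoZeroDivisors A := by
    refine ⟨fun {x y} hxy => ?_⟩
    by_contra! h
    obtain ⟨e, w, rfl⟩ := hfactor x h.1
    obtain ⟨f, w', rfl⟩ := hfactor y h.2
    apply ht (e + f)
    rw [pow_add, ← Units.mul_right_eq_zero (w * w'), Units.val_mul, ← hxy]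
    ring
  exact NoZeroDivisors.to_isDomain A

theorem IsDVal.apply_algebraMap_eq_one {F : Type u} [Field F] [Algebra A F]
    [IsFractionRing A F] {ν : F → ℤ} (hν : IsDVal ν) {t : A} (ht : t ∈ maximalIdeal A)
    (ht0 : t ≠ 0) (hnonneg : ∀ a : A, a ≠ 0 → 0 ≤ ν (algebraMap A F a))
    (hpos : ∀ a : A, a ≠ 0 → (a ∈ Ideal.span {t} ↔ 0 < ν (algebraMap A F a))) :
    ν (algebraMap A F t) = 1 := by
  have hA : ∀ a : A, a ≠ 0 → algebraMap A F a ≠ 0 := fun a ha =>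
    (map_ne_zero_iff _ (IsFractionRing.injective A F)).mpr ha
  have hdvd : ∀ a : A, a ≠ 0 → ν (algebraMap A F t) ∣ ν (algebraMap A F a) := by
    intro a ha
    obtain ⟨e, u, rfl, hu⟩ := exists_eq_pow_mul_not_dvd ht ha
    have hu0 : u ≠ 0 := right_ne_zero_of_mul ha
    have hνu : ν (algebraMap A F u) = 0 := le_antisymm
      (not_lt.mp fun h => hu (Ideal.mem_span_singleton.mp ((hpos u hu0).mpr h))) (hnonneg u hu0)
    rw [_root_.map_mul, map_pow, hν.map_mul _ _ (pow_ne_zero _ (hA t ht0)) (hA u hu0), hνu,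
      add_zero, ← zpow_natCast, hν.map_zpow (hA t ht0)]
    exact dvd_mul_left _ _
  obtain ⟨x, hx0, hx⟩ := hν.surj 1
  obtain ⟨a, b, hb, rfl⟩ := IsFractionRing.div_surjective (A := A) x
  have hb0 : b ≠ 0 := nonZeroDivisors.ne_zero hb
  have ha0 : a ≠ 0 := by rintro rfl; simp at hx0
  have hsplit := hν.map_mul _ _ hx0 (hA b hb0)
  rw [div_mul_cancel₀ _ (hA b hb0), hx] at hsplit
  have h1 : ν (algebraMap A F t) ∣ 1 := by
    rw [show (1 : ℤ) = ν (algebraMap A F a) - ν (algebraMap A F b) by omega]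
    exact dvd_sub (hdvd a ha0) (hdvd b hb0)
  exact Int.eq_one_of_dvd_one ((hpos t ht0).mp (Ideal.mem_span_singleton_self t)).le h1

end LocalRing

theorem IsHeightOne.eq_of_le {R : Type u} [CommRing R] {p q : Ideal R} (hp : IsHeightOne p)
    (hq : IsHeightOne q) (h : q ≤ p) : q = p :=
  h.eq_or_lt.resolve_right fun hlt => hq.2.1 (hp.2.2 q hq.1 hlt)

section RegularLocalRing

open IsLocalRing

variable {R : Type u} [CommRing R] [IsLocalRing R] {π₁ π₂ : R}

theorem Ideal.Quotient.mk_mem_maximalIdeal_iff {I : Ideal R} [IsLocalRing (R ⧸ I)] {x : R} :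
    Ideal.Quotient.mk I x ∈ maximalIdeal (R ⧸ I) ↔ x ∈ maximalIdeal R := by
  have := IsLocalHom.of_surjective (Ideal.Quotient.mk I) Ideal.Quotient.mk_surjective
  rw [← Ideal.mem_comap, IsLocalRing.maximalIdeal_comap]

theorem mem_maximalIdeal_of_span_pair (hπ : Ideal.span {π₁, π₂} = maximalIdeal R) :
    π₁ ∈ maximalIdeal R :=
  hπ ▸ Ideal.subset_span (by simp)

theorem map_mk_maximalIdeal_eq_span {I : Ideal R} (hπ : Ideal.span {π₁, π₂} = maximalIdeal R)
    (hI : π₁ ∈ I) :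
    (maximalIdeal R).map (Ideal.Quotient.mk I) = Ideal.span {Ideal.Quotient.mk I π₂} := by
  rw [← hπ, Ideal.map_span, Set.image_pair, Ideal.Quotient.eq_zero_iff_mem.mpr hI,
    Ideal.span_insert_zero]

variable [IsNoetherianRing R]

theorem pow_notMem_span_singleton_of_ringKrullDim_eq_two (hdim : ringKrullDim R = 2)
    (hπ : Ideal.span {π₁, π₂} = maximalIdeal R) (n : ℕ) : π₂ ^ n ∉ Ideal.span {π₁} := by
  intro h
  have hmin : maximalIdeal R ∈ (Ideal.span {π₁}).minimalPrimes := by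
    refine ⟨⟨inferInstance, ?_⟩, fun q ⟨hq, hle⟩ _ => ?_⟩
    · rw [Ideal.span_le, Set.singleton_subset_iff]
      exact mem_maximalIdeal_of_span_pair hπ
    · rw [← hπ, Ideal.span_le, Set.insert_subset_iff, Set.singleton_subset_iff]
      exact ⟨hle (Ideal.mem_span_singleton_self π₁), hq.mem_of_pow_mem n (hle h)⟩
  have hheight : ((maximalIdeal R).height : WithBot ℕ∞) ≤ 1 := by
    exact_mod_cast Ideal.height_le_one_of_isPrincipal_of_mem_minimalPrimes _ _ hmin
  rw [maximalIdeal_height_eq_ringKrullDim, hdim] at hheight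
  exact absurd hheight (by decide)

theorem ne_zero_of_ringKrullDim_eq_two (hdim : ringKrullDim R = 2)
    (hπ : Ideal.span {π₁, π₂} = maximalIdeal R) : π₁ ≠ 0 := fun h =>
  pow_notMem_span_singleton_of_ringKrullDim_eq_two (π₁ := π₂) hdim
    (by rwa [Ideal.span_pair_comm]) 1 (by simp [h])

theorem isPrime_span_singleton_of_ringKrullDim_eq_two (hdim : ringKrullDim R = 2)
    (hπ : Ideal.span {π₁, π₂} = maximalIdeal R) : (Ideal.span {π₁}).IsPrime := by
  have : Nontrivial (R ⧸ Ideal.span {π₁}) := Ideal.Quotient.nontrivial_iff.mpr fun h =>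
    (mem_maximalIdeal _).mp (mem_maximalIdeal_of_span_pair hπ)
      (Ideal.span_singleton_eq_top.mp h)
  have : IsLocalRing (R ⧸ Ideal.span {π₁}) := .of_surjective' _ Ideal.Quotient.mk_surjective
  rw [← Ideal.Quotient.isDomain_iff_prime]
  refine isDomain_of_maximalIdeal_eq_span_singleton (t := Ideal.Quotient.mk _ π₂) ?_
    fun n h => ?_
  · rw [← map_maximalIdeal_of_surjective _ Ideal.Quotient.mk_surjective,
      map_mk_maximalIdeal_eq_span hπ (Ideal.mem_span_singleton_self π₁)]
  · rw [← map_pow, Ideal.Quotient.eq_zero_iff_mem] at h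
    exact pow_notMem_span_singleton_of_ringKrullDim_eq_two hdim hπ n h

theorem isHeightOne_span_singleton {π : R} (hπ : π ∈ maximalIdeal R) (hπ0 : π ≠ 0)
    (hprime : (Ideal.span {π}).IsPrime) : IsHeightOne (Ideal.span {π}) := by
  refine ⟨hprime, by simpa using hπ0, fun q hq hlt => ?_⟩
  by_contra hq0
  obtain ⟨x, hxq, hx0⟩ := Submodule.exists_mem_ne_zero_of_ne_bot hq0
  obtain ⟨e, u, rfl, hu⟩ := exists_eq_pow_mul_not_dvd hπ hx0
  have hπq : π ∈ q := hq.mem_of_pow_mem e <|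
    (hq.mem_or_mem hxq).resolve_right fun huq => hu (Ideal.mem_span_singleton.mp (hlt.le huq))
  exact hlt.not_ge ((Ideal.span_singleton_le_iff_mem _).mpr hπq)

def RegPrimes.ofParameters (hdim : ringKrullDim R = 2)
    (hπ : Ideal.span {π₁, π₂} = maximalIdeal R) : RegPrimes R :=
  ⟨Ideal.span {π₁},
    isHeightOne_span_singleton (mem_maximalIdeal_of_span_pair hπ)
      (ne_zero_of_ringKrullDim_eq_two hdim hπ)
      (isPrime_span_singleton_of_ringKrullDim_eq_two hdim hπ),
    π₂, map_mk_maximalIdeal_eq_span hπ (Ideal.mem_span_singleton_self π₁)⟩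

theorem RegPrimes.eq_ofParameters (hdim : ringKrullDim R = 2)
    (hπ : Ideal.span {π₁, π₂} = maximalIdeal R) {p : RegPrimes R} (h : π₁ ∈ p.1) :
    p = RegPrimes.ofParameters hdim hπ :=
  Subtype.ext (p.2.1.eq_of_le (RegPrimes.ofParameters hdim hπ).2.1
    ((Ideal.span_singleton_le_iff_mem _).mpr h)).symm

theorem RegPrimes.ofParameters_ne (hdim : ringKrullDim R = 2)
    (hπ : Ideal.span {π₁, π₂} = maximalIdeal R) (hπ' : Ideal.span {π₂, π₁} = maximalIdeal R) :
    RegPrimes.ofParameters hdim hπ ≠ RegPrimes.ofParameters hdim hπ' := fun h =>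
  pow_notMem_span_singleton_of_ringKrullDim_eq_two hdim hπ 1 <| by
    rw [pow_one]
    change π₂ ∈ (RegPrimes.ofParameters hdim hπ).1
    rw [h]
    exact Ideal.mem_span_singleton_self π₂

end RegularLocalRing

theorem IsNuPrime.apply_eq_zero {R L : Type u} [CommRing R] [Field L] [Algebra R L]
    {p : Ideal R} {ν : L → ℤ} (hν : IsNuPrime p ν) {x : R} (hx0 : x ≠ 0) (hx : x ∉ p) :
    ν (algebraMap R L x) = 0 :=
  le_antisymm (not_lt.mp fun h => hx ((hν.2.2 x hx0).mpr h)) (hν.2.1 x hx0)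

section ResidueMaps

open IsLocalRing

variable {R : Type u} [CommRing R] [IsLocalRing R] [IsDomain R] {p : RegPrimes R}

theorem IsNuBar.apply_eq_zero {ν : ResFieldP p → ℤ} (hν : IsNuBar p ν) {x : R}
    (hx : x ∉ maximalIdeal R) :
    ν (algebraMap (R ⧸ p.1) (FractionRing (R ⧸ p.1)) (Ideal.Quotient.mk p.1 x)) = 0 := by
  have hx0 : Ideal.Quotient.mk p.1 x ≠ 0 := fun h =>
    hx (le_maximalIdeal p.2.1.1.ne_top (Ideal.Quotient.eq_zero_iff_mem.mp h))
  exact le_antisymm (not_lt.mp fun h => hx ((hν.2.2 x hx0).mpr h)) (hν.2.1 _ hx0)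

theorem IsNuBar.apply_eq_one [IsNoetherianRing R] {ν : ResFieldP p → ℤ} (hν : IsNuBar p ν)
    {π₁ π₂ : R} (hπ : Ideal.span {π₁, π₂} = maximalIdeal R) (hπ₁ : π₁ ∈ p.1) (hπ₂ : π₂ ∉ p.1) :
    ν (algebraMap (R ⧸ p.1) (FractionRing (R ⧸ p.1)) (Ideal.Quotient.mk p.1 π₂)) = 1 := by
  have : IsLocalRing (R ⧸ p.1) := .of_surjective' _ Ideal.Quotient.mk_surjective
  have hm : maximalIdeal (R ⧸ p.1) = Ideal.span {Ideal.Quotient.mk p.1 π₂} := by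
    rw [← map_maximalIdeal_of_surjective _ Ideal.Quotient.mk_surjective,
      map_mk_maximalIdeal_eq_span hπ hπ₁]
  -- `ResFieldP p` is a non-reducible synonym of `FractionRing (R ⧸ p.1)`
  let : Algebra (R ⧸ p.1) (ResFieldP p) :=
    inferInstanceAs (Algebra (R ⧸ p.1) (FractionRing (R ⧸ p.1)))
  have : IsFractionRing (R ⧸ p.1) (ResFieldP p) :=
    inferInstanceAs (IsFractionRing (R ⧸ p.1) (FractionRing (R ⧸ p.1)))
  refine IsDVal.apply_algebraMap_eq_one (A := R ⧸ p.1) (F := ResFieldP p) hν.1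
    (hm ▸ Ideal.mem_span_singleton_self _) (mt Ideal.Quotient.eq_zero_iff_mem.mp hπ₂) hν.2.1
    fun a ha => ?_
  obtain ⟨x, rfl⟩ := Ideal.Quotient.mk_surjective a
  rw [← hm, Ideal.Quotient.mk_mem_maximalIdeal_iff]
  exact hν.2.2 x ha

theorem IsResBar.apply_eq {k : Type u} [Field k] [Algebra k R] {ν : ResFieldP p → ℤ}
    {res : ResFieldP p → k} (hν : IsNuBar p ν) (hres : IsResBar p ν res) {x : R} {c : k}
    (hc : x - algebraMap k R c ∈ maximalIdeal R) :
    res (algebraMap (R ⧸ p.1) (FractionRing (R ⧸ p.1)) (Ideal.Quotient.mk p.1 x)) = c := by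
  set ι : R → ResFieldP p := fun y =>
    algebraMap (R ⧸ p.1) (FractionRing (R ⧸ p.1)) (Ideal.Quotient.mk p.1 y)
  have hint : ∀ y : R, ι y = 0 ∨ 0 ≤ ν (ι y) := fun y => by
    by_cases hy : Ideal.Quotient.mk p.1 y = 0
    · left; simp only [ι, hy, map_zero]; rfl
    · exact .inr (hν.2.1 _ hy)
  have hsmall : res (ι (x - algebraMap k R c)) = 0 := by
    refine (hres.1.zero_iff _ (hint _)).mpr ?_
    by_cases hy : Ideal.Quotient.mk p.1 (x - algebraMap k R c) = 0
    · left; simp only [ι, hy, map_zero]; rfl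
    · exact .inr ((hν.2.2 _ hy).mp hc)
  have hsplit : ι x = ι (algebraMap k R c) + ι (x - algebraMap k R c) := by
    have h : algebraMap (R ⧸ p.1) (FractionRing (R ⧸ p.1)) (Ideal.Quotient.mk p.1 x) =
        algebraMap _ _ (Ideal.Quotient.mk p.1 (algebraMap k R c)) +
          algebraMap _ _ (Ideal.Quotient.mk p.1 (x - algebraMap k R c)) := by
      rw [← map_add, ← map_add, add_sub_cancel]
    exact h
  change res (ι x) = c
  rw [hsplit, hres.1.map_add _ _ (hint _) (hint _), hsmall, add_zero]
  exact hres.2 c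

end ResidueMaps

theorem IsTame.apply_wedgeF_eq_zero_of_notMem {R L K : Type u} [CommRing R] [Nontrivial R]
    [Field L] [Field K] [Algebra R L] [IsFractionRing R L] {p : Ideal R} [p.IsPrime]
    {ν : L → ℤ} (hν : IsNuPrime p ν) {res : L → K} {n : ℕ}
    {D : ⋀[ℚ]^(n + 1) (UnitsQ L) →ₗ[ℚ] ⋀[ℚ]^n (UnitsQ K)} (hD : IsTame ν res n D)
    {π₁ π₂ : R} (h₁ : π₁ ≠ 0) (h₂ : π₂ ≠ 0) (hp₁ : π₁ ∉ p) (hp₂ : π₂ ∉ p)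
    (ξ : Fin (n + 1) → Rˣ) (a b : Fin (n + 1) → ℤ) :
    D (wedgeF (n + 1) fun i =>
      algebraMap R L π₁ ^ a i * algebraMap R L π₂ ^ b i * algebraMap R L (ξ i : R)) = 0 := by
  have hL : ∀ x : R, x ≠ 0 → algebraMap R L x ≠ 0 := fun x hx =>
    (map_ne_zero_iff _ (IsFractionRing.injective R L)).mpr hx
  have hξ : ∀ i, (ξ i : R) ∉ p := fun i h =>
    Ideal.IsPrime.ne_top' (p.eq_top_of_isUnit_mem h (ξ i).isUnit)
  refine hD.apply_wedgeF_eq_zero_of_val_eq_zero hν.1 _ fun i => ⟨?_, ?_⟩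
  · exact mul_ne_zero (mul_ne_zero (zpow_ne_zero _ (hL _ h₁)) (zpow_ne_zero _ (hL _ h₂)))
      (hL _ (ξ i).ne_zero)
  · rw [hν.1.map_zpow_mul_zpow_mul (hL _ h₁) (hL _ h₂) (hL _ (ξ i).ne_zero),
      hν.apply_eq_zero h₁ hp₁, hν.apply_eq_zero h₂ hp₂, hν.apply_eq_zero (ξ i).ne_zero (hξ i)]
    simp

open IsLocalRing in
theorem IsTame.comp_apply_wedgeF_of_span_eq {k R L : Type u} [Field k] [CommRing R] [IsDomain R]
    [IsLocalRing R] [IsNoetherianRing R] [Algebra k R] [Field L] [Algebra R L]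
    [IsFractionRing R L] {π₁ π₂ : R} (hdim : ringKrullDim R = 2)
    (hπ : Ideal.span {π₁, π₂} = maximalIdeal R) {p : RegPrimes R} (hp : p.1 = Ideal.span {π₁})
    {ν : L → ℤ} (hν : IsNuPrime p.1 ν) {res : L → ResFieldP p} (hres : IsResPrime p ν res)
    {νb : ResFieldP p → ℤ} (hνb : IsNuBar p νb) {resb : ResFieldP p → k}
    (hresb : IsResBar p νb resb) {n : ℕ}
    {D : ⋀[ℚ]^(n + 2) (UnitsQ L) →ₗ[ℚ] ⋀[ℚ]^(n + 1) (UnitsQ (ResFieldP p))}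
    (hD : IsTame ν res (n + 1) D)
    {D' : ⋀[ℚ]^(n + 1) (UnitsQ (ResFieldP p)) →ₗ[ℚ] ⋀[ℚ]^n (UnitsQ k)}
    (hD' : IsTame νb resb n D') (ξ : Fin (n + 2) → Rˣ) {c : Fin (n + 2) → k}
    (hc : ∀ i, (ξ i : R) - algebraMap k R (c i) ∈ maximalIdeal R) (a b : Fin (n + 2) → ℤ) :
    D' (D (wedgeF (n + 2) fun i =>
      algebraMap R L π₁ ^ a i * algebraMap R L π₂ ^ b i * algebraMap R L (ξ i : R))) =
      ∑ i : Fin (n + 2), ∑ j : Fin (n + 1),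
        ((-1) ^ (i : ℕ) * a i * ((-1) ^ (j : ℕ) * b (i.succAbove j)) : ℚ) •
          wedgeF n fun m => c (i.succAbove (j.succAbove m)) := by
  have hL : ∀ x : R, x ≠ 0 → algebraMap R L x ≠ 0 := fun x hx =>
    (map_ne_zero_iff _ (IsFractionRing.injective R L)).mpr hx
  have hπ₁0 : π₁ ≠ 0 := ne_zero_of_ringKrullDim_eq_two hdim hπ
  have hπ₂0 : π₂ ≠ 0 := ne_zero_of_ringKrullDim_eq_two hdim (by rwa [Ideal.span_pair_comm])
  have hπ₂p : π₂ ∉ p.1 :=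
    hp ▸ by simpa using pow_notMem_span_singleton_of_ringKrullDim_eq_two hdim hπ 1
  have hξm : ∀ i, (ξ i : R) ∉ maximalIdeal R := fun i h => (mem_maximalIdeal _).mp h (ξ i).isUnit
  have hξp : ∀ i, (ξ i : R) ∉ p.1 := fun i h => hξm i (le_maximalIdeal p.2.1.1.ne_top h)
  have hνπ₁ : ν (algebraMap R L π₁) = 1 :=
    hν.1.apply_algebraMap_eq_one (mem_maximalIdeal_of_span_pair hπ) hπ₁0 hν.2.1
      fun a ha => hp ▸ hν.2.2 a ha
  have hνbπ₂ : νb (res (algebraMap R L π₂)) = 1 := by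
    rw [hres.2]
    exact hνb.apply_eq_one hπ (hp ▸ Ideal.mem_span_singleton_self π₁) hπ₂p
  simp only [mul_assoc (algebraMap R L π₁ ^ a _)]
  rw [IsTame.comp_apply_wedgeF_zpow_mul_zpow_mul hν.1 hres.1 hνb.1 hD hD' (hL _ hπ₁0) hνπ₁
    (hL _ hπ₂0) (hν.apply_eq_zero hπ₂0 hπ₂p) hνbπ₂ _ fun i =>
      ⟨hL _ (ξ i).ne_zero, hν.apply_eq_zero (ξ i).ne_zero (hξp i), by
        rw [hres.2]; exact hνb.apply_eq_zero (hξm i)⟩]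
  simp only [hres.2, hresb.apply_eq hνb (hc _)]

theorem statement_10_general (k R L : Type u) [Field k]
    [CommRing R] [IsDomain R] [IsLocalRing R] [IsNoetherianRing R] [Algebra k R]
    [Field L] [Algebra R L] [IsFractionRing R L]
    (hdim : ringKrullDim R = 2)
    (hresk : ∀ x : R, ∃ c : k, x - algebraMap k R c ∈ IsLocalRing.maximalIdeal R)
    (π₁ π₂ : R) (hπ : Ideal.span {π₁, π₂} = IsLocalRing.maximalIdeal R)
    (νp : ∀ p : RegPrimes R, L → ℤ) (hνp : ∀ p, IsNuPrime p.1 (νp p))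
    (resp : ∀ p : RegPrimes R, L → ResFieldP p) (hresp : ∀ p, IsResPrime p (νp p) (resp p))
    (νb : ∀ p : RegPrimes R, ResFieldP p → ℤ) (hνb : ∀ p, IsNuBar p (νb p))
    (resb : ∀ p : RegPrimes R, ResFieldP p → k) (hresb : ∀ p, IsResBar p (νb p) (resb p))
    (D : ∀ p : RegPrimes R, ⋀[ℚ]^4 (UnitsQ L) →ₗ[ℚ] ⋀[ℚ]^3 (UnitsQ (ResFieldP p)))
    (hD : ∀ p, IsTame (νp p) (resp p) 3 (D p))
    (D' : ∀ p : RegPrimes R, ⋀[ℚ]^3 (UnitsQ (ResFieldP p)) →ₗ[ℚ] ⋀[ℚ]^2 (UnitsQ k))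
    (hD' : ∀ p, IsTame (νb p) (resb p) 2 (D' p))
    (aa bb : Fin 4 → ℤ) (ξ : Fin 4 → Rˣ)
    (b : ⋀[ℚ]^4 (UnitsQ L))
    (hb : b = wedgeF 4 (fun i => (algebraMap R L π₁) ^ (aa i) *
        (algebraMap R L π₂) ^ (bb i) * algebraMap R L (ξ i : R))) :
    {p : RegPrimes R | D' p (D p b) ≠ 0}.Finite ∧
    ∑ᶠ p : RegPrimes R, D' p (D p b) = 0 := by
  classical
  choose c hc using fun i => hresk (ξ i : R)
  have hπ' : Ideal.span {π₂, π₁} = IsLocalRing.maximalIdeal R := by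
    rwa [Ideal.span_pair_comm]
  set p₁ := RegPrimes.ofParameters hdim hπ
  set p₂ := RegPrimes.ofParameters hdim hπ'
  have hsupp : ∀ p, D' p (D p b) ≠ 0 → p = p₁ ∨ p = p₂ := by
    intro p hp
    by_contra! hne
    refine hp ?_
    rw [hb, (hD p).apply_wedgeF_eq_zero_of_notMem (hνp p) (ne_zero_of_ringKrullDim_eq_two hdim hπ)
      (ne_zero_of_ringKrullDim_eq_two hdim hπ') (mt (RegPrimes.eq_ofParameters hdim hπ) hne.1)
      (mt (RegPrimes.eq_ofParameters hdim hπ') hne.2), map_zero]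
  have hb' : b = wedgeF 4 fun i => algebraMap R L π₂ ^ bb i * algebraMap R L π₁ ^ aa i *
      algebraMap R L (ξ i : R) := by
    simp only [hb, mul_comm (algebraMap R L π₁ ^ aa _)]
  have hcancel : D' p₁ (D p₁ b) + D' p₂ (D p₂ b) = 0 := by
    have h₁ := IsTame.comp_apply_wedgeF_of_span_eq hdim hπ rfl (hνp p₁) (hresp p₁) (hνb p₁)
      (hresb p₁) (hD p₁) (hD' p₁) ξ hc aa bb
    have h₂ := IsTame.comp_apply_wedgeF_of_span_eq hdim hπ' rfl (hνp p₂) (hresp p₂) (hνb p₂)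
      (hresb p₂) (hD p₂) (hD' p₂) ξ hc bb aa
    rw [← hb] at h₁
    rw [← hb'] at h₂
    rw [h₁, h₂, add_eq_zero_iff_eq_neg]
    exact Fin.sum_sum_succAbove_antisymm (fun i => (aa i : ℚ)) (fun i => (bb i : ℚ))
      fun e => wedgeF 2 fun m => c (e m)
  refine ⟨(Set.toFinite {p₁, p₂}).subset fun p hp => hsupp p hp, ?_⟩
  rw [finsum_eq_sum_of_support_subset (s := {p₁, p₂}) _ fun p hp => by simpa using hsupp p hp,
    Finset.sum_pair (RegPrimes.ofParameters_ne hdim hπ hπ'), hcancel]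

/-- Parshin reciprocity for strictly regular elements of `Λ⁴ L^×`
over a two-dimensional regular local ring. -/
theorem statement_10 (k R L : Type u) [Field k] [IsAlgClosed k] [CharZero k]
    [CommRing R] [IsDomain R] [IsLocalRing R] [IsNoetherianRing R] [Algebra k R]
    [Field L] [Algebra R L] [IsFractionRing R L]
    (hdim : ringKrullDim R = 2)
    (hresk : ∀ x : R, ∃ c : k, x - algebraMap k R c ∈ IsLocalRing.maximalIdeal R)
    (π₁ π₂ : R) (hπ : Ideal.span {π₁, π₂} = IsLocalRing.maximalIdeal R)
    (νp : ∀ p : RegPrimes R, L → ℤ) (hνp : ∀ p, IsNuPrime p.1 (νp p))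
    (resp : ∀ p : RegPrimes R, L → ResFieldP p) (hresp : ∀ p, IsResPrime p (νp p) (resp p))
    (νb : ∀ p : RegPrimes R, ResFieldP p → ℤ) (hνb : ∀ p, IsNuBar p (νb p))
    (resb : ∀ p : RegPrimes R, ResFieldP p → k) (hresb : ∀ p, IsResBar p (νb p) (resb p))
    (D : ∀ p : RegPrimes R, ⋀[ℚ]^4 (UnitsQ L) →ₗ[ℚ] ⋀[ℚ]^3 (UnitsQ (ResFieldP p)))
    (hD : ∀ p, IsTame (νp p) (resp p) 3 (D p))
    (D' : ∀ p : RegPrimes R, ⋀[ℚ]^3 (UnitsQ (ResFieldP p)) →ₗ[ℚ] ⋀[ℚ]^2 (UnitsQ k))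
    (hD' : ∀ p, IsTame (νb p) (resb p) 2 (D' p))
    (aa bb : Fin 4 → ℤ) (ξ : Fin 4 → Rˣ)
    (b : ⋀[ℚ]^4 (UnitsQ L))
    (hb : b = wedgeF 4 (fun i => (algebraMap R L π₁) ^ (aa i) *
        (algebraMap R L π₂) ^ (bb i) * algebraMap R L (ξ i : R))) :
    {p : RegPrimes R | D' p (D p b) ≠ 0}.Finite ∧
    ∑ᶠ p : RegPrimes R, D' p (D p b) = 0 :=
  statement_10_general k R L hdim hresk π₁ π₂ hπ νp hνp resp hresp νb hνb resb hresb D hD D' hD' aa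
    bb ξ b hb
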